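/- arXiv:2407.17580 — 3 statements merged into one kernel-verified Lean document; each statement's English description precedes it below -/
import Mathlib

section
/- Let μ̂ > 0, λ̂ ∈ ℝ with λ̂ + μ̂ > 0, and ω > 0 be real numbers, and let q_P, q_S ∈ ℂ satisfy q_P² − q_S² = −ω²(λ̂ + μ̂)/(μ̂(λ̂ + 2μ̂)). Then: (1) if Im q_P > 0 then Im(q_P + q_S) > 0 and Im(q_P − q_S) > 0; (2) if Im q_P < 0 then Im(q_P + q_S) < 0 and Im(q_P − q_S) < 0. -/
/-- Lemma on the sheets of the Riemann surface: if
`q_P² − q_S² = −ω²(λ̂ + μ̂)/(μ̂(λ̂ + 2μ̂))` (a negative real number), then the signs of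
`Im (q_P + q_S)` and `Im (q_P − q_S)` agree with the sign of `Im q_P`. -/
theorem im_qP_add_sub_qS_sign (mu lam om : ℝ) (hmu : 0 < mu) (hlm : 0 < lam + mu)
    (hom : 0 < om) (qP qS : ℂ)
    (h : qP ^ 2 - qS ^ 2 = -((om ^ 2 * (lam + mu) : ℝ) / (mu * (lam + 2 * mu)) : ℝ)) :
    (0 < qP.im → 0 < (qP + qS).im ∧ 0 < (qP - qS).im) ∧
    (qP.im < 0 → (qP + qS).im < 0 ∧ (qP - qS).im < 0) := by
  set c : ℝ := -((om ^ 2 * (lam + mu)) / (mu * (lam + 2 * mu))) with hc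
  have hlm2 : 0 < lam + 2 * mu := by linarith
  have hcneg : c < 0 := by
    rw [hc, neg_neg_iff_pos]
    positivity
  set a : ℂ := qP + qS with ha
  set b : ℂ := qP - qS with hb
  have hcast : (c : ℂ) = -((om ^ 2 * (lam + mu) : ℝ) / (mu * (lam + 2 * mu)) : ℝ) := by
    rw [hc]; push_cast; ring
  have hab : a * b = (c : ℂ) := by
    rw [ha, hb, hcast]
    linear_combination h
  have hane : a ≠ 0 := by
    intro h0
    rw [h0, zero_mul] at hab
    exact hcneg.ne (by exact_mod_cast hab.symm)
  have hbval : b = (c : ℂ) / a := by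
    rw [eq_div_iff hane, mul_comm]
    exact hab
  have hN : 0 < Complex.normSq a := Complex.normSq_pos.mpr hane
  have hbim : b.im = (-c / Complex.normSq a) * a.im := by
    rw [hbval, Complex.div_im]
    simp [Complex.ofReal_im, Complex.ofReal_re]
    ring
  have hqPim : qP.im = (a.im + b.im) / 2 := by
    have : qP = (a + b) / 2 := by rw [ha, hb]; ring
    rw [this]
    simp [Complex.div_im, Complex.add_im]
  have hk : 0 < -c / Complex.normSq a := div_pos (by linarith) hN
  constructor
  · intro hpos
    rw [hqPim] at hpos
    have haim : 0 < a.im := by nlinarith [hbim]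
    exact ⟨haim, by nlinarith [hbim]⟩
  · intro hneg
    rw [hqPim] at hneg
    have haim : a.im < 0 := by nlinarith [hbim]
    exact ⟨haim, by nlinarith [hbim]⟩
end

section
/- Let q_P, q_S, ω ∈ ℂ be nonzero, let A, B : ℝ → Matrix (Fin 2) (Fin 2) ℂ and C ∈ Matrix (Fin 2) (Fin 2) ℂ, and define 𝒢(x,y) = A(x)·(sin((x−y)q_P)/q_P) + B(y)·(sin((x−y)q_S)/q_S) + C·((cos((x−y)q_S) − cos((x−y)q_P))/ω²). Set γ := max{|Im q_P| − Im q_P, (|Im(q_P − q_S)| − Im(q_P − q_S))/2, (|Im(q_P + q_S)| − Im(q_P + q_S))/2} (note γ ≥ 0). Then for all real x ≤ y, the entrywise maximum norm satisfies ‖𝒢(x,y)·e^{−i(x−y)q_P}‖ ≤ (‖A(x)‖/|q_P| + ‖B(y)‖/|q_S| + 2‖C‖/|ω|²)·e^{(y−x)γ}. -/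
attribute [local instance] Matrix.normedAddCommGroup Matrix.normedSpace

/-!
Multiplying `sin` and `cos` by the phase `e^{-i(x-y)q_P}` turns every term of the kernel into a
combination of exponentials `e^{-i(x-y)w}` with `w ∈ {0, 2q_P, q_P - q_S, q_P + q_S}`. For
`x ≤ y` such an exponential has modulus `e^{(y-x)(-Im w)}`, and `γ` dominates each `-Im w`,
so the triangle inequality gives the bound.
-/

open Complex

lemma norm_exp_neg_I_mul_le {x y γ : ℝ} (hxy : x ≤ y) {w : ℂ} (hw : -w.im ≤ γ) :
    ‖exp (-I * ((x : ℂ) - y) * w)‖ ≤ Real.exp ((y - x) * γ) := by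
  have hre : (-I * ((x : ℂ) - y) * w).re = (y - x) * -w.im := by
    simp only [neg_mul, neg_re, mul_re, I_re, sub_re, ofReal_re, zero_mul, I_im, sub_im,
      ofReal_im, sub_self, mul_zero, mul_im, one_mul, zero_add, zero_sub, neg_neg, mul_neg]
    ring
  rw [norm_exp, hre]
  exact Real.exp_le_exp.mpr (mul_le_mul_of_nonneg_left hw (sub_nonneg.mpr hxy))

lemma exp_neg_I_mul_mul_sin (z p s : ℂ) :
    exp (-I * z * p) * sin (z * s) =
      (exp (-I * z * (p + s)) - exp (-I * z * (p - s))) * I / 2 := by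
  rw [show -I * z * (p + s) = -I * z * p + -(z * s) * I by ring,
    show -I * z * (p - s) = -I * z * p + z * s * I by ring, exp_add, exp_add, sin]
  ring

lemma exp_neg_I_mul_mul_cos_sub_cos (z p s : ℂ) :
    exp (-I * z * p) * (cos (z * s) - cos (z * p)) =
      (exp (-I * z * (p + s)) + exp (-I * z * (p - s)) - exp (-I * z * (p + p)) - 1) / 2 := by
  rw [show -I * z * (p + s) = -I * z * p + -(z * s) * I by ring,
    show -I * z * (p - s) = -I * z * p + z * s * I by ring,
    show -I * z * (p + p) = -I * z * p + -(z * p) * I by ring]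
  have hunit : exp (-I * z * p) * exp (z * p * I) = 1 := by
    rw [← exp_add, show -I * z * p + z * p * I = 0 by ring, exp_zero]
  simp only [exp_add, cos]
  linear_combination (-1 / 2 : ℂ) * hunit

section

variable {x y γ : ℝ} {p s : ℂ}

lemma norm_exp_neg_I_mul_mul_sin_le (hxy : x ≤ y) (hγ_add : -(p + s).im ≤ γ)
    (hγ_sub : -(p - s).im ≤ γ) :
    ‖exp (-I * ((x : ℂ) - y) * p) * sin (((x : ℂ) - y) * s)‖ ≤ Real.exp ((y - x) * γ) := by
  rw [exp_neg_I_mul_mul_sin, norm_div, norm_mul, norm_I, mul_one, RCLike.norm_ofNat]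
  have := (norm_sub_le _ _).trans (add_le_add (norm_exp_neg_I_mul_le hxy hγ_add)
    (norm_exp_neg_I_mul_le hxy hγ_sub))
  linarith

lemma norm_exp_neg_I_mul_mul_cos_sub_cos_le (hxy : x ≤ y) (hγ : 0 ≤ γ)
    (hγ_add : -(p + s).im ≤ γ) (hγ_sub : -(p - s).im ≤ γ) (hγ_two : -(p + p).im ≤ γ) :
    ‖exp (-I * ((x : ℂ) - y) * p) * (cos (((x : ℂ) - y) * s) - cos (((x : ℂ) - y) * p))‖ ≤
      2 * Real.exp ((y - x) * γ) := by
  rw [exp_neg_I_mul_mul_cos_sub_cos, norm_div, RCLike.norm_ofNat]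
  have h₁ : ‖(1 : ℂ)‖ ≤ Real.exp ((y - x) * γ) := by
    rw [norm_one]
    exact Real.one_le_exp (mul_nonneg (sub_nonneg.mpr hxy) hγ)
  set E : ℂ → ℂ := fun w => exp (-I * ((x : ℂ) - y) * w)
  have := norm_sub_le (E (p + s) + E (p - s) - E (p + p)) 1
  have := norm_sub_le (E (p + s) + E (p - s)) (E (p + p))
  have := norm_add_le (E (p + s)) (E (p - s))
  linarith [norm_exp_neg_I_mul_le hxy hγ_add, norm_exp_neg_I_mul_le hxy hγ_sub,
    norm_exp_neg_I_mul_le hxy hγ_two]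

end

theorem green_kernel_estimate_general (qP qS ω : ℂ)
    (A B : ℝ → Matrix (Fin 2) (Fin 2) ℂ) (C : Matrix (Fin 2) (Fin 2) ℂ) :
    let G : ℝ → ℝ → Matrix (Fin 2) (Fin 2) ℂ := fun x y =>
      (Complex.sin (((x : ℂ) - y) * qP) / qP) • A x +
      (Complex.sin (((x : ℂ) - y) * qS) / qS) • B y +
      ((Complex.cos (((x : ℂ) - y) * qS) - Complex.cos (((x : ℂ) - y) * qP)) / ω ^ 2) • C
    let γ : ℝ := max (|qP.im| - qP.im)
      (max ((|(qP - qS).im| - (qP - qS).im) / 2) ((|(qP + qS).im| - (qP + qS).im) / 2))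
    ∀ x y : ℝ, x ≤ y →
      ‖(Complex.exp (-Complex.I * ((x : ℂ) - y) * qP)) • G x y‖ ≤
        (‖A x‖ / ‖qP‖ + ‖B y‖ / ‖qS‖ + 2 * ‖C‖ / ‖ω‖ ^ 2) *
          Real.exp ((y - x) * γ) := by
  intro G γ x y hxy
  have hγ : 0 ≤ γ := le_max_of_le_left (by linarith [le_abs_self qP.im])
  have hγ_zero : -(qP - qP).im ≤ γ := by simpa using hγ
  have hγ_two : -(qP + qP).im ≤ γ := le_max_of_le_left (by
    simp only [add_im]; linarith [neg_abs_le qP.im])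
  have hγ_sub : -(qP - qS).im ≤ γ :=
    le_max_of_le_right (le_max_of_le_left (by linarith [neg_abs_le (qP - qS).im]))
  have hγ_add : -(qP + qS).im ≤ γ :=
    le_max_of_le_right (le_max_of_le_right (by linarith [neg_abs_le (qP + qS).im]))
  simp only [G]
  set e := exp (-I * ((x : ℂ) - y) * qP)
  set z : ℂ := (x : ℂ) - y
  calc _
      = ‖(e * sin (z * qP) / qP) • A x + (e * sin (z * qS) / qS) • B y +
          (e * (cos (z * qS) - cos (z * qP)) / ω ^ 2) • C‖ := by
        simp only [smul_add, smul_smul, mul_div_assoc]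
    _ ≤ ‖e * sin (z * qP)‖ / ‖qP‖ * ‖A x‖ + ‖e * sin (z * qS)‖ / ‖qS‖ * ‖B y‖ +
          ‖e * (cos (z * qS) - cos (z * qP))‖ / ‖ω‖ ^ 2 * ‖C‖ := by
        refine norm_add₃_le.trans_eq ?_
        simp only [norm_smul, norm_div, norm_pow]
    _ ≤ Real.exp ((y - x) * γ) / ‖qP‖ * ‖A x‖ + Real.exp ((y - x) * γ) / ‖qS‖ * ‖B y‖ +
          2 * Real.exp ((y - x) * γ) / ‖ω‖ ^ 2 * ‖C‖ := by
        gcongr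
        · exact norm_exp_neg_I_mul_mul_sin_le hxy hγ_two hγ_zero
        · exact norm_exp_neg_I_mul_mul_sin_le hxy hγ_add hγ_sub
        · exact norm_exp_neg_I_mul_mul_cos_sub_cos_le hxy hγ hγ_add hγ_sub hγ_two
    _ = _ := by ring

/-- Key kernel estimate: the transformed Green kernel `𝒢̃(x,y) = 𝒢(x,y)e^{−i(x−y)q_P}`
satisfies `‖𝒢̃(x,y)‖ ≤ (‖A(x)‖/|q_P| + ‖B(y)‖/|q_S| + 2‖C‖/|ω|²)·e^{(y−x)γ}` for `x ≤ y`,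
where `γ` vanishes exactly on the physical sheet. -/
theorem green_kernel_estimate (qP qS ω : ℂ) (hqP : qP ≠ 0) (hqS : qS ≠ 0) (hω : ω ≠ 0)
    (A B : ℝ → Matrix (Fin 2) (Fin 2) ℂ) (C : Matrix (Fin 2) (Fin 2) ℂ) :
    let G : ℝ → ℝ → Matrix (Fin 2) (Fin 2) ℂ := fun x y =>
      (Complex.sin (((x : ℂ) - y) * qP) / qP) • A x +
      (Complex.sin (((x : ℂ) - y) * qS) / qS) • B y +
      ((Complex.cos (((x : ℂ) - y) * qS) - Complex.cos (((x : ℂ) - y) * qP)) / ω ^ 2) • C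
    let γ : ℝ := max (|qP.im| - qP.im)
      (max ((|(qP - qS).im| - (qP - qS).im) / 2) ((|(qP + qS).im| - (qP + qS).im) / 2))
    ∀ x y : ℝ, x ≤ y →
      ‖(Complex.exp (-Complex.I * ((x : ℂ) - y) * qP)) • G x y‖ ≤
        (‖A x‖ / ‖qP‖ + ‖B y‖ / ‖qS‖ + 2 * ‖C‖ / ‖ω‖ ^ 2) *
          Real.exp ((y - x) * γ) :=
  green_kernel_estimate_general qP qS ω A B C
end

section
/- Let λ_I, μ_I, ω > 0 be real with λ_I + 2μ_I > 0, set c_I = (λ_I + μ_I)/(λ_I + 2μ_I), let G₁₁ᴴ, G₁₂ᴴ, G₂₁ᴴ, G₂₂ᴴ ∈ ℂ and H > 0, and define G₂₁(x) = −(c_I/2)G₁₁ᴴ(x − H) + G₂₁ᴴ, G₂₂(x) = −(c_I/2)G₁₂ᴴ(x − H) + G₂₂ᴴ. For ξ, q_P, q_S ∈ ℂ with q_P² = ω²/(λ_I + 2μ_I) − ξ², q_S² = ω²/μ_I − ξ², Im q_P > 0, Im q_S > 0, define the 2×2 matrix ℋ₀(x, ξ) with first column (G₂₁(x) + i q_P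 (μ_I/ω²) G₁₁ᴴ, G₂₂(x) + i q_P (μ_I/ω²) G₁₂ᴴ) and second column (−(μ_I ξ/ω²) G₁₁ᴴ e^{−i(q_P − q_S)x}, −(μ_I ξ/ω²) G₁₂ᴴ e^{−i(q_P − q_S)x}). Then for each fixed x ∈ [0, H] there exist C > 0 and R > 0 such that whenever Re ξ ≥ R (and q_P, q_S are as above): ‖ℋ₀(x, ξ) − (−ξ(μ_I/ω²)·M₁ + G_H(x) + ξ⁻¹·M₂(x))‖ ≤ C/|ξ|², where M₁ = [[G₁₁ᴴ, G₁₁ᴴ], [G₁₂ᴴ, G₁₂ᴴ]], G_H(x) = [[G₂₁(x), −(c_I x/2)G₁₁ᴴ], [G₂₂(x), −(c_I x/2)G₁₂ᴴ]], and M₂(x) = [[(μ_I/(2(λ_I + 2μ_I)))G₁₁ᴴ, −(ω² c_I² x²/(8μ_I))G₁₁ᴴ], [(μ_I/(2(λ_I + 2μ_I)))G₁₂ᴴ, −(ω² c_I² x²/(8μ_I))G₁₂ᴴ]]. -/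
/-!
Put `a = ω²/(λ_I + 2μ_I)`, `b = ω²/μ_I`, `w_P = i q_P`, `w_S = i q_S`. Then `w_P² = ξ² - a` and
`Re w_P = -Im q_P < 0`, so `w_P` is the root of `ξ² - a` near `-ξ`: from `(ξ + w_P)(ξ - w_P) = a`
and `|ξ - w_P| ≥ |ξ|` one gets `w_P = -ξ + a/(2ξ) + O(|ξ|⁻³)`, and likewise for `w_S`. Hence the
phase `-i(q_P - q_S)x = (w_S - w_P)x` is `κ/ξ + O(|ξ|⁻³)` with `κ = (b - a)x/2`, and a third-order
Taylor bound for `exp` gives `ξ(e^{(w_S - w_P)x} - 1) = κ + κ²/(2ξ) + O(|ξ|⁻²)`. Since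
`c_I = μ_I (b - a)/ω²`, the difference between `ℋ₀(x, ξ)` and its expansion is the rank-one matrix
`(μ_I/ω²) (G₁₁ᴴ, G₁₂ᴴ)ᵀ ⊗ (remainder of w_P, remainder of the exponential)`.
-/

attribute [local instance] Matrix.normedAddCommGroup Matrix.normedSpace

theorem norm_add_sub_div_le_of_sq_eq_sub {a ξ w : ℂ} (hw : w ^ 2 = ξ ^ 2 - a)
    (hw_re : w.re ≤ 0) (hξ : 0 < ξ.re) (ha : ‖a‖ ≤ ξ.re ^ 2) :
    ‖w + ξ - a / (2 * ξ)‖ ≤ ‖a‖ ^ 2 / (2 * ‖ξ‖ ^ 3) := by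
  have hre : ξ.re ≤ ‖ξ‖ := Complex.re_le_norm ξ
  have hξ0 : ξ ≠ 0 := by rintro rfl; simp at hξ
  have hprod : ‖ξ + w‖ * ‖ξ - w‖ = ‖a‖ := by
    rw [← norm_mul]; congr 1; linear_combination -hw
  have hdiff_re : ξ.re ≤ ‖ξ - w‖ :=
    le_trans (by simp only [Complex.sub_re]; linarith) (Complex.re_le_norm _)
  -- `‖ξ + w‖ ≤ ‖a‖ / ξ.re ≤ ξ.re`, so `ξ - w = 2ξ - (ξ + w)` is at least as long as `ξ`
  have hsum_le : ‖ξ + w‖ ≤ ‖ξ‖ := by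
    by_contra! h
    nlinarith [norm_nonneg (ξ + w)]
  have hdiff_ge : ‖ξ‖ ≤ ‖ξ - w‖ := by
    have := norm_sub_norm_le (2 * ξ) (ξ + w)
    rw [norm_mul, Complex.norm_two] at this
    rw [show ξ - w = 2 * ξ - (ξ + w) by ring]
    linarith
  have hsum : ‖ξ + w‖ ≤ ‖a‖ / ‖ξ‖ := by
    rw [le_div_iff₀ (norm_pos_iff.mpr hξ0), ← hprod]
    gcongr
  have hid : w + ξ - a / (2 * ξ) = (ξ + w) ^ 2 / (2 * ξ) := by
    field_simp
    linear_combination -hw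
  rw [hid, norm_div, norm_pow, norm_mul, Complex.norm_two]
  calc ‖ξ + w‖ ^ 2 / (2 * ‖ξ‖) ≤ (‖a‖ / ‖ξ‖) ^ 2 / (2 * ‖ξ‖) := by gcongr
    _ = ‖a‖ ^ 2 / (2 * ‖ξ‖ ^ 3) := by field_simp

theorem Complex.norm_exp_sub_one_sub_id_sub_sq_div_two_le {x : ℂ} (hx : ‖x‖ ≤ 1) :
    ‖exp x - 1 - x - x ^ 2 / 2‖ ≤ ‖x‖ ^ 3 :=
  calc ‖exp x - 1 - x - x ^ 2 / 2‖
      = ‖exp x - ∑ m ∈ Finset.range 3, x ^ m / m.factorial‖ := by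
        simp [Finset.sum_range_succ, Nat.factorial, sub_sub]
    _ ≤ ‖x‖ ^ 3 * ((Nat.succ 3 : ℝ) * (Nat.factorial 3 * (3 : ℕ) : ℝ)⁻¹) :=
        exp_bound hx (by decide)
    _ ≤ ‖x‖ ^ 3 := mul_le_of_le_one_right (by positivity) (by norm_num [Nat.factorial])

theorem norm_mul_exp_sub_one_sub_le {κ ξ e : ℂ} {C : ℝ} (hC : 0 ≤ C)
    (hξ : ‖κ‖ + C + 1 ≤ ‖ξ‖) (he : ‖e - κ / ξ‖ ≤ C / ‖ξ‖ ^ 3) :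
    ‖ξ * (Complex.exp e - 1) - (κ + κ ^ 2 / (2 * ξ))‖ ≤
      ((‖κ‖ + C) ^ 3 + 2 * C) / ‖ξ‖ ^ 2 := by
  set r := ‖ξ‖
  have hr : 0 < r := by linarith [norm_nonneg κ]
  have hξ0 : ξ ≠ 0 := norm_pos_iff.mp hr
  have hκξ : ‖κ / ξ‖ = ‖κ‖ / r := norm_div _ _
  have hδ : r * ‖e - κ / ξ‖ ≤ C / r ^ 2 := by
    calc r * ‖e - κ / ξ‖ ≤ r * (C / r ^ 3) := by gcongr
      _ = C / r ^ 2 := by field_simp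
  have hCr : C / r ^ 3 ≤ C / r := by
    gcongr
    exact le_self_pow₀ (by linarith [norm_nonneg κ]) (by norm_num)
  have he_norm : ‖e‖ ≤ (‖κ‖ + C) / r := by
    calc ‖e‖ ≤ ‖κ / ξ‖ + ‖e - κ / ξ‖ := norm_le_norm_add_norm_sub' e (κ / ξ)
      _ ≤ ‖κ‖ / r + C / r := by rw [hκξ]; linarith
      _ = (‖κ‖ + C) / r := by ring
  have he_one : ‖e‖ ≤ 1 := he_norm.trans ((div_le_one hr).mpr (by linarith))
  have hsum : ‖e + κ / ξ‖ ≤ 2 := by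
    calc ‖e + κ / ξ‖ ≤ ‖e‖ + ‖κ‖ / r := by rw [← hκξ]; exact norm_add_le _ _
      _ ≤ 1 + 1 := by gcongr; exact (div_le_one hr).mpr (by linarith)
      _ = 2 := by norm_num
  -- with `u = κ / ξ`: `κ + κ²/(2ξ) = ξ (u + u²/2)` and `e + e²/2 - u - u²/2 = (e - u)(1 + (e + u)/2)`
  have hsplit : ξ * (Complex.exp e - 1) - (κ + κ ^ 2 / (2 * ξ)) =
      ξ * (Complex.exp e - 1 - e - e ^ 2 / 2) + ξ * (e - κ / ξ) * (1 + (e + κ / ξ) / 2) := by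
    field_simp
    ring
  have htaylor : r * ‖Complex.exp e - 1 - e - e ^ 2 / 2‖ ≤ (‖κ‖ + C) ^ 3 / r ^ 2 := by
    calc r * ‖Complex.exp e - 1 - e - e ^ 2 / 2‖ ≤ r * ((‖κ‖ + C) / r) ^ 3 := by
          gcongr
          exact (Complex.norm_exp_sub_one_sub_id_sub_sq_div_two_le he_one).trans (by gcongr)
      _ = (‖κ‖ + C) ^ 3 / r ^ 2 := by field_simp
  have hfactor : ‖1 + (e + κ / ξ) / 2‖ ≤ 2 := by
    calc ‖1 + (e + κ / ξ) / 2‖ ≤ 1 + ‖e + κ / ξ‖ / 2 := by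
          simpa [norm_div] using norm_add_le (1 : ℂ) ((e + κ / ξ) / 2)
      _ ≤ 2 := by linarith
  rw [hsplit]
  calc ‖ξ * (Complex.exp e - 1 - e - e ^ 2 / 2) + ξ * (e - κ / ξ) * (1 + (e + κ / ξ) / 2)‖
      ≤ r * ‖Complex.exp e - 1 - e - e ^ 2 / 2‖ +
          r * ‖e - κ / ξ‖ * ‖1 + (e + κ / ξ) / 2‖ := by
        refine (norm_add_le _ _).trans_eq ?_
        rw [norm_mul, norm_mul, norm_mul]
    _ ≤ (‖κ‖ + C) ^ 3 / r ^ 2 + C / r ^ 2 * 2 := by gcongr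
    _ = ((‖κ‖ + C) ^ 3 + 2 * C) / r ^ 2 := by ring

theorem norm_sub_mul_sub_div_le {a b x ξ wa wb : ℂ} {εa εb : ℝ}
    (ha : ‖wa + ξ - a / (2 * ξ)‖ ≤ εa) (hb : ‖wb + ξ - b / (2 * ξ)‖ ≤ εb) :
    ‖(wb - wa) * x - (b - a) * x / 2 / ξ‖ ≤ ‖x‖ * (εb + εa) := by
  have hid : (wb - wa) * x - (b - a) * x / 2 / ξ =
      x * ((wb + ξ - b / (2 * ξ)) - (wa + ξ - a / (2 * ξ))) := by ring
  rw [hid, norm_mul]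
  gcongr
  exact (norm_sub_le _ _).trans (add_le_add hb ha)

/-- The remainders in `wa = -ξ + a / (2ξ) + ⋯` and `ξ (e^{(wb - wa) x} - 1) = κ + κ² / (2ξ) + ⋯`,
`κ = (b - a) x / 2`, for the roots `wa² = ξ² - a`, `wb² = ξ² - b` near `-ξ`. -/
noncomputable def branchExpansionRemainder (a b x ξ wa wb : ℂ) : Fin 2 → ℂ :=
  ![wa + ξ - a / (2 * ξ),
    (b - a) * x / 2 + ((b - a) * x / 2) ^ 2 / (2 * ξ) - ξ * (Complex.exp ((wb - wa) * x) - 1)]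

theorem exists_norm_branchExpansionRemainder_le (a b x : ℂ) :
    ∃ K ≥ (0 : ℝ), ∃ R > (0 : ℝ), ∀ ξ wa wb : ℂ, wa ^ 2 = ξ ^ 2 - a → wb ^ 2 = ξ ^ 2 - b →
      wa.re ≤ 0 → wb.re ≤ 0 → R ≤ ξ.re →
      ‖branchExpansionRemainder a b x ξ wa wb‖ ≤ K / ‖ξ‖ ^ 2 := by
  set κ := (b - a) * x / 2
  set C₁ := ‖x‖ * (‖b‖ ^ 2 / 2 + ‖a‖ ^ 2 / 2)
  have hC₁ : 0 ≤ C₁ := by positivity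
  refine ⟨‖a‖ ^ 2 + (‖κ‖ + C₁) ^ 3 + 2 * C₁, by positivity, 1 + ‖a‖ + ‖b‖ + ‖κ‖ + C₁,
    by positivity, fun ξ wa wb hwa hwb hwa_re hwb_re hR => ?_⟩
  have hre : 1 + ‖a‖ + ‖b‖ ≤ ξ.re := by linarith [norm_nonneg κ]
  have hξ : ‖κ‖ + C₁ + 1 ≤ ‖ξ‖ := by
    linarith [Complex.re_le_norm ξ, norm_nonneg a, norm_nonneg b]
  have hξ1 : 1 ≤ ‖ξ‖ := by linarith [norm_nonneg κ]
  have hre_pos : 0 < ξ.re := by linarith [norm_nonneg a, norm_nonneg b]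
  have hA := norm_add_sub_div_le_of_sq_eq_sub hwa hwa_re hre_pos
    (by nlinarith [norm_nonneg a, norm_nonneg b])
  have hB := norm_add_sub_div_le_of_sq_eq_sub hwb hwb_re hre_pos
    (by nlinarith [norm_nonneg a, norm_nonneg b])
  have hE := norm_mul_exp_sub_one_sub_le hC₁ hξ
    ((norm_sub_mul_sub_div_le (x := x) hA hB).trans_eq (by ring))
  refine (pi_norm_le_iff_of_nonneg (by positivity)).mpr (Fin.forall_fin_two.mpr ⟨?_, ?_⟩)
  · calc _ ≤ ‖a‖ ^ 2 / (2 * ‖ξ‖ ^ 3) := hA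
      _ ≤ ‖a‖ ^ 2 / ‖ξ‖ ^ 2 :=
          div_le_div_of_nonneg_left (sq_nonneg _) (by positivity) (by nlinarith)
      _ ≤ _ := by gcongr; linarith [pow_nonneg (add_nonneg (norm_nonneg κ) hC₁) 3]
  · refine (norm_sub_rev _ _).trans_le (hE.trans ?_)
    gcongr
    linarith [sq_nonneg ‖a‖]

theorem norm_vecMulVec_le {m n α : Type*} [Fintype m] [Fintype n] [NormedRing α]
    (u : m → α) (v : n → α) : ‖Matrix.vecMulVec u v‖ ≤ ‖u‖ * ‖v‖ :=
  (Matrix.norm_le_iff (by positivity)).mpr fun i j =>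
    (norm_mul_le _ _).trans (mul_le_mul (norm_le_pi_norm u i) (norm_le_pi_norm v j)
      (norm_nonneg _) (norm_nonneg _))

theorem unperturbed_faddeev_asymptotics_general (lamI muI om : ℝ)
    (hmu : 0 < muI) (hom : 0 < om) (hlm : 0 < lamI + 2 * muI)
    (G11H G12H G21H G22H : ℂ) (H : ℝ)
    (x : ℝ) :
    let cI : ℝ := (lamI + muI) / (lamI + 2 * muI)
    let G21 : ℝ → ℂ := fun t => -((cI : ℂ) / 2) * G11H * ((t : ℂ) - (H : ℂ)) + G21H
    let G22 : ℝ → ℂ := fun t => -((cI : ℂ) / 2) * G12H * ((t : ℂ) - (H : ℂ)) + G22H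
    let GH : ℝ → Matrix (Fin 2) (Fin 2) ℂ := fun t =>
      !![G21 t, -((cI : ℂ) * t / 2) * G11H; G22 t, -((cI : ℂ) * t / 2) * G12H]
    let M₁ : Matrix (Fin 2) (Fin 2) ℂ := !![G11H, G11H; G12H, G12H]
    let M₂ : ℝ → Matrix (Fin 2) (Fin 2) ℂ := fun t =>
      !![((muI : ℂ) / (2 * ((lamI : ℂ) + 2 * muI))) * G11H,
          -(((om : ℂ) ^ 2 * cI ^ 2 * t ^ 2) / (8 * muI)) * G11H;
        ((muI : ℂ) / (2 * ((lamI : ℂ) + 2 * muI))) * G12H,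
          -(((om : ℂ) ^ 2 * cI ^ 2 * t ^ 2) / (8 * muI)) * G12H]
    ∃ C > (0 : ℝ), ∃ R > (0 : ℝ), ∀ ξ qP qS : ℂ,
      qP ^ 2 = (om : ℂ) ^ 2 / ((lamI : ℂ) + 2 * muI) - ξ ^ 2 →
      qS ^ 2 = (om : ℂ) ^ 2 / (muI : ℂ) - ξ ^ 2 →
      0 < qP.im → 0 < qS.im → R ≤ ξ.re →
      ‖(!![G21 x + Complex.I * qP * ((muI : ℂ) / (om : ℂ) ^ 2) * G11H,
            -((muI : ℂ) * ξ / (om : ℂ) ^ 2) * G11H *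
              Complex.exp (-Complex.I * (qP - qS) * (x : ℂ));
          G22 x + Complex.I * qP * ((muI : ℂ) / (om : ℂ) ^ 2) * G12H,
            -((muI : ℂ) * ξ / (om : ℂ) ^ 2) * G12H *
              Complex.exp (-Complex.I * (qP - qS) * (x : ℂ))] : Matrix (Fin 2) (Fin 2) ℂ)
        - ((-ξ * ((muI : ℂ) / (om : ℂ) ^ 2)) • M₁ + GH x + ξ⁻¹ • M₂ x)‖
        ≤ C / ‖ξ‖ ^ 2 := by
  intro cI G21 G22 GH M₁ M₂
  set a : ℂ := (om : ℂ) ^ 2 / ((lamI : ℂ) + 2 * muI)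
  set b : ℂ := (om : ℂ) ^ 2 / (muI : ℂ)
  obtain ⟨K, hK, R, hR, hrem⟩ := exists_norm_branchExpansionRemainder_le a b x
  set g : Fin 2 → ℂ := ![(muI : ℂ) / (om : ℂ) ^ 2 * G11H, (muI : ℂ) / (om : ℂ) ^ 2 * G12H]
  refine ⟨‖g‖ * K + 1, by positivity, R, hR, fun ξ qP qS hqP hqS himP himS hξ => ?_⟩
  have hξ0 : ξ ≠ 0 := by rintro rfl; simp at hξ; linarith
  have hom0 : (om : ℂ) ≠ 0 := by exact_mod_cast hom.ne'
  have hmu0 : (muI : ℂ) ≠ 0 := by exact_mod_cast hmu.ne'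
  have hlm0 : (lamI : ℂ) + 2 * muI ≠ 0 := by exact_mod_cast hlm.ne'
  have hM₂ : (muI : ℂ) / (2 * ((lamI : ℂ) + 2 * muI)) = muI / om ^ 2 * a / 2 := by
    simp only [a]; field_simp
  have hcI : (cI : ℂ) = muI / om ^ 2 * (b - a) := by
    simp only [cI, a, b]; push_cast; grind
  have hremainder := hrem ξ (Complex.I * qP) (Complex.I * qS)
    (by linear_combination -hqP + qP ^ 2 * Complex.I_sq)
    (by linear_combination -hqS + qS ^ 2 * Complex.I_sq)
    (by simpa using himP.le) (by simpa using himS.le) hξ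
  calc _ = ‖Matrix.vecMulVec g
        (branchExpansionRemainder a b x ξ (Complex.I * qP) (Complex.I * qS))‖ := by
        rw [show -Complex.I * (qP - qS) * x = (Complex.I * qS - Complex.I * qP) * x by ring]
        congr 1
        ext i j
        fin_cases i <;> fin_cases j <;>
          simp only [branchExpansionRemainder, GH, M₁, M₂, G21, G22, g, hcI, hM₂,
            Matrix.sub_apply, Matrix.add_apply, Matrix.smul_apply, Matrix.of_apply,
            Matrix.vecMulVec_apply, Matrix.cons_val', Matrix.cons_val_zero, Matrix.cons_val_one,
            Matrix.empty_val', Matrix.cons_val_fin_one, Fin.zero_eta, Fin.mk_one, smul_eq_mul] <;>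
          field_simp <;> ring
    _ ≤ ‖g‖ * (K / ‖ξ‖ ^ 2) := (norm_vecMulVec_le _ _).trans (by gcongr)
    _ ≤ (‖g‖ * K + 1) / ‖ξ‖ ^ 2 := by rw [← mul_div_assoc]; gcongr; linarith

/-- Asymptotics of the unperturbed Faddeev solution `ℋ₀(x,ξ)` on the physical sheet:
`ℋ₀(x,ξ) = −ξ(μ_I/ω²)·M₁ + G_H(x) + ξ⁻¹·M₂(x) + O(|ξ|⁻²)` as `Re ξ → ∞`. -/
theorem unperturbed_faddeev_asymptotics (lamI muI om : ℝ) (hlam : 0 < lamI)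
    (hmu : 0 < muI) (hom : 0 < om) (hlm : 0 < lamI + 2 * muI)
    (G11H G12H G21H G22H : ℂ) (H : ℝ) (hH : 0 < H)
    (x : ℝ) (hx : x ∈ Set.Icc 0 H) :
    let cI : ℝ := (lamI + muI) / (lamI + 2 * muI)
    let G21 : ℝ → ℂ := fun t => -((cI : ℂ) / 2) * G11H * ((t : ℂ) - (H : ℂ)) + G21H
    let G22 : ℝ → ℂ := fun t => -((cI : ℂ) / 2) * G12H * ((t : ℂ) - (H : ℂ)) + G22H
    let GH : ℝ → Matrix (Fin 2) (Fin 2) ℂ := fun t =>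
      !![G21 t, -((cI : ℂ) * t / 2) * G11H; G22 t, -((cI : ℂ) * t / 2) * G12H]
    let M₁ : Matrix (Fin 2) (Fin 2) ℂ := !![G11H, G11H; G12H, G12H]
    let M₂ : ℝ → Matrix (Fin 2) (Fin 2) ℂ := fun t =>
      !![((muI : ℂ) / (2 * ((lamI : ℂ) + 2 * muI))) * G11H,
          -(((om : ℂ) ^ 2 * cI ^ 2 * t ^ 2) / (8 * muI)) * G11H;
        ((muI : ℂ) / (2 * ((lamI : ℂ) + 2 * muI))) * G12H,
          -(((om : ℂ) ^ 2 * cI ^ 2 * t ^ 2) / (8 * muI)) * G12H]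
    ∃ C > (0 : ℝ), ∃ R > (0 : ℝ), ∀ ξ qP qS : ℂ,
      qP ^ 2 = (om : ℂ) ^ 2 / ((lamI : ℂ) + 2 * muI) - ξ ^ 2 →
      qS ^ 2 = (om : ℂ) ^ 2 / (muI : ℂ) - ξ ^ 2 →
      0 < qP.im → 0 < qS.im → R ≤ ξ.re →
      ‖(!![G21 x + Complex.I * qP * ((muI : ℂ) / (om : ℂ) ^ 2) * G11H,
            -((muI : ℂ) * ξ / (om : ℂ) ^ 2) * G11H *
              Complex.exp (-Complex.I * (qP - qS) * (x : ℂ));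
          G22 x + Complex.I * qP * ((muI : ℂ) / (om : ℂ) ^ 2) * G12H,
            -((muI : ℂ) * ξ / (om : ℂ) ^ 2) * G12H *
              Complex.exp (-Complex.I * (qP - qS) * (x : ℂ))] : Matrix (Fin 2) (Fin 2) ℂ)
        - ((-ξ * ((muI : ℂ) / (om : ℂ) ^ 2)) • M₁ + GH x + ξ⁻¹ • M₂ x)‖
        ≤ C / ‖ξ‖ ^ 2 :=
  unperturbed_faddeev_asymptotics_general lamI muI om hmu hom hlm G11H G12H G21H G22H H x
end
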